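/- arXiv:1305.0412 — 2 statements merged into one kernel-verified Lean document; each statement's English description precedes it below -/
import Mathlib

section
/- Minimum of tr(A⁻¹ Z) under power constraint only: for A ≻ 0, the minimizer of tr(A⁻¹ Z) over Hermitian Z ≻ 0 subject to tr(Z⁻¹) ≤ P is Z* = (tr(A^{-1/2})/P) · A^{1/2}, and the optimal value is tr(A^{-1/2})²/P. -/
open Matrix
open scoped ComplexOrder

/-- The square root of a positive semi-definite matrix, as `Matrix.PosSemidef.sqrt` was defined
in Mathlib of December 2024 (since removed in favour of `CFC.sqrt`). -/
noncomputable def Matrix.PosSemidef.sqrt {n : Type*} {𝕜 : Type*} [Fintype n] [RCLike 𝕜]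
    [DecidableEq n] {A : Matrix n n 𝕜} (hA : A.PosSemidef) : Matrix n n 𝕜 :=
  (hA.1.eigenvectorUnitary : Matrix n n 𝕜) *
    diagonal (fun i => ((√(hA.1.eigenvalues i) : ℝ) : 𝕜)) *
    (star hA.1.eigenvectorUnitary : Matrix n n 𝕜)

/-!
Write `S = A^{1/2}` and `W = Z^{1/2}`. Since `tr S⁻¹ = tr (W⁻¹ · W S⁻¹)`, the Cauchy–Schwarz
inequality for the Frobenius inner product gives
`(tr S⁻¹)² ≤ tr Z⁻¹ · tr (S⁻¹ Z S⁻¹) = tr Z⁻¹ · tr (A⁻¹ Z) ≤ P · tr (A⁻¹ Z)`.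
The matrix `Z* = (tr S⁻¹ / P) S` meets the power constraint with equality and attains this bound,
`tr (A⁻¹ Z*) = (tr S⁻¹ / P) · tr (S⁻¹ S⁻¹ S) = (tr S⁻¹)² / P`.
-/

open scoped MatrixOrder

namespace Matrix

variable {n 𝕜 : Type*} [Fintype n] [DecidableEq n] [RCLike 𝕜]

theorem PosSemidef.sqrt_eq_cfc_sqrt {A : Matrix n n 𝕜} (hA : A.PosSemidef) :
    hA.sqrt = CFC.sqrt A := by
  rw [CFC.sqrt_eq_real_sqrt A hA.nonneg, cfcₙ_eq_cfc, hA.1.cfc_eq, IsHermitian.cfc,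
    Unitary.conjStarAlgAut_apply, PosSemidef.sqrt]
  rfl

theorem PosSemidef.sqrt_mul_self {A : Matrix n n 𝕜} (hA : A.PosSemidef) :
    hA.sqrt * hA.sqrt = A := by
  rw [hA.sqrt_eq_cfc_sqrt, CFC.sqrt_mul_sqrt_self A hA.nonneg]

theorem PosDef.posDef_sqrt {A : Matrix n n 𝕜} (hA : A.PosDef) :
    hA.posSemidef.sqrt.PosDef := by
  rw [hA.posSemidef.sqrt_eq_cfc_sqrt]
  exact (CFC.sqrt_nonneg A).posSemidef.posDef_iff_isUnit.mpr
    (CFC.isUnit_sqrt_iff_isStrictlyPositive.mpr hA.isStrictlyPositive)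

theorem norm_trace_conjTranspose_mul_sq_le (X Y : Matrix n n 𝕜) :
    ‖(Xᴴ * Y).trace‖ ^ 2 ≤ RCLike.re (Xᴴ * X).trace * RCLike.re (Yᴴ * Y).trace := by
  let := toMatrixSeminormedAddCommGroup (1 : Matrix n n 𝕜) PosSemidef.one
  let := toMatrixInnerProductSpace (1 : Matrix n n 𝕜) PosSemidef.one
  -- the inner product induced by `1` is `⟪x, y⟫ = tr (y xᴴ)`
  have hinner (U V : Matrix n n 𝕜) : inner 𝕜 Uᴴ Vᴴ = (Vᴴ * U).trace := by
    change (Vᴴ * 1 * Uᴴᴴ).trace = _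
    rw [Matrix.mul_one, conjTranspose_conjTranspose]
  have hswap : (Yᴴ * X).trace = star (Xᴴ * Y).trace := by
    rw [← trace_conjTranspose, conjTranspose_mul, conjTranspose_conjTranspose]
  have := inner_mul_inner_self_le (𝕜 := 𝕜) Xᴴ Yᴴ
  rwa [hinner, hinner, hinner, hinner, hswap, norm_star, ← sq] at this

theorem PosDef.re_trace_sq_le {Z : Matrix n n 𝕜} (hZ : Z.PosDef) (T : Matrix n n 𝕜) :
    RCLike.re T.trace ^ 2 ≤ RCLike.re Z⁻¹.trace * RCLike.re (Tᴴ * Z * T).trace := by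
  set W := hZ.posSemidef.sqrt
  have hW : W.PosDef := hZ.posDef_sqrt
  have hWW : W * W = Z := hZ.posSemidef.sqrt_mul_self
  have hWT : W⁻¹ᴴ * (W * T) = T := by
    rw [hW.inv.1.eq, nonsing_inv_mul_cancel_left W T hW.det_pos.ne'.isUnit]
  have hZinv : W⁻¹ᴴ * W⁻¹ = Z⁻¹ := by rw [hW.inv.1.eq, ← hWW, mul_inv_rev]
  have hZT : (W * T)ᴴ * (W * T) = Tᴴ * Z * T := by
    rw [conjTranspose_mul, hW.1.eq, ← hWW]; noncomm_ring
  calc RCLike.re T.trace ^ 2 ≤ ‖T.trace‖ ^ 2 := by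
        rw [← sq_abs]; gcongr; exact RCLike.abs_re_le_norm _
    _ ≤ _ := by simpa only [hWT, hZinv, hZT] using norm_trace_conjTranspose_mul_sq_le W⁻¹ (W * T)

end Matrix

/-- Minimum of `tr(A⁻¹ Z)` under the power constraint only: the minimizer of `tr(A⁻¹ Z)` over
positive definite Hermitian `Z` with `tr(Z⁻¹) ≤ P` is `Z* = (tr(A^{-1/2})/P) A^{1/2}`, and the
optimal value is `tr(A^{-1/2})²/P`. -/
theorem power_only_minimizer {m : ℕ} (A : Matrix (Fin m) (Fin m) ℂ) (hA : A.PosDef)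
    (P : ℝ) (hP : 0 < P) :
    (((hA.posSemidef.sqrt⁻¹.trace / (P : ℂ)) • hA.posSemidef.sqrt).PosDef) ∧
    ((((hA.posSemidef.sqrt⁻¹.trace / (P : ℂ)) • hA.posSemidef.sqrt)⁻¹.trace).re ≤ P ∧
    (∀ Z : Matrix (Fin m) (Fin m) ℂ, Z.PosDef → ((Z⁻¹.trace).re ≤ P) →
      ((A⁻¹ * ((hA.posSemidef.sqrt⁻¹.trace / (P : ℂ)) • hA.posSemidef.sqrt)).trace).re ≤
        ((A⁻¹ * Z).trace).re) ∧
    (A⁻¹ * ((hA.posSemidef.sqrt⁻¹.trace / (P : ℂ)) • hA.posSemidef.sqrt)).trace =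
      hA.posSemidef.sqrt⁻¹.trace ^ 2 / (P : ℂ)) := by
  set S := hA.posSemidef.sqrt
  set t := S⁻¹.trace
  have hS : S.PosDef := hA.posDef_sqrt
  have hSinv : S⁻¹ᴴ = S⁻¹ := hS.inv.1.eq
  have hAinv : A⁻¹ = S⁻¹ * S⁻¹ := by rw [← hA.posSemidef.sqrt_mul_self, Matrix.mul_inv_rev]
  have hval : (A⁻¹ * ((t / P) • S)).trace = t ^ 2 / P := by
    rw [Matrix.mul_smul, trace_smul, hAinv, nonsing_inv_mul_cancel_right S _ hS.det_pos.ne'.isUnit,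
      smul_eq_mul]
    ring
  rcases isEmpty_or_nonempty (Fin m) with hm | hm
  · refine ⟨.of_dotProduct_mulVec_pos (Subsingleton.elim _ _)
      fun v hv => (hv (Subsingleton.elim v 0)).elim, ?_, fun Z _ _ => ?_, hval⟩ <;>
    simp [trace_eq_zero_of_isEmpty, hP.le]
  have ht : 0 < t := hS.inv.trace_pos
  have ht_re : t = (t.re : ℂ) := Complex.eq_re_of_ofReal_le ht.le
  have hP' : (0 : ℂ) < P := Complex.zero_lt_real.mpr hP
  refine ⟨hS.smul (div_pos ht hP'), ?_, fun Z hZ hZP => ?_, hval⟩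
  · have := invertibleOfNonzero (div_pos ht hP').ne'
    rw [Matrix.inv_smul _ _ hS.det_pos.ne'.isUnit, invOf_eq_inv, trace_smul,
      smul_eq_mul, inv_div, div_mul_cancel₀ _ ht.ne', Complex.ofReal_re]
  · have htrace : (S⁻¹ᴴ * Z * S⁻¹).trace = (A⁻¹ * Z).trace := by
      rw [hSinv, Matrix.mul_assoc, trace_mul_comm, Matrix.mul_assoc, ← hAinv, trace_mul_comm]
    have key : t.re ^ 2 ≤ Z⁻¹.trace.re * (A⁻¹ * Z).trace.re := htrace ▸ hZ.re_trace_sq_le S⁻¹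
    have hr : 0 ≤ (A⁻¹ * Z).trace.re := (Complex.nonneg_iff.mp
      (htrace ▸ (hZ.posSemidef.conjTranspose_mul_mul_same S⁻¹).trace_nonneg)).1
    rw [hval, ht_re, ← Complex.ofReal_pow, ← Complex.ofReal_div, Complex.ofReal_re,
      div_le_iff₀ hP, mul_comm]
    exact key.trans (mul_le_mul_of_nonneg_right hZP hr)
end

section
/- Weak duality for the ZF–ZF filter design: for any positive definite Hermitian Z with tr(B⁻¹ Z) ≥ γ and tr(Z⁻¹) ≤ P, and any ν ≥ 0 with A⁻¹ − ν B⁻¹ ⪰ 0, one has tr(A⁻¹ Z) ≥ (1/P)·tr((A⁻¹ − ν B⁻¹)^{1/2})² + ν γ. -/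
/-!
Write `M = A⁻¹ - ν B⁻¹`. Cauchy–Schwarz for the inner product `⟪X, Y⟫ = tr (Y Z Xᴴ)` induced by
`Z`, applied to `X = Z⁻¹` and `Y = M^{1/2}`, gives `tr (M^{1/2})² ≤ tr (M Z) tr (Z⁻¹) ≤ P tr (M Z)`,
while `tr (A⁻¹ Z) = tr (M Z) + ν tr (B⁻¹ Z) ≥ tr (M Z) + ν γ`.
-/

open Matrix
open scoped ComplexOrder

namespace Matrix

variable {𝕜 n : Type*} [RCLike 𝕜] [Fintype n]

open scoped MatrixOrder in
lemma PosSemidef.eigenvectorUnitary_mul_diagonal_sqrt_mul_star [DecidableEq n]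
    {M : Matrix n n 𝕜} (hM : M.PosSemidef) :
    (hM.1.eigenvectorUnitary : Matrix n n 𝕜) *
      diagonal ((RCLike.ofReal : ℝ → 𝕜) ∘ Real.sqrt ∘ hM.1.eigenvalues) *
      (star hM.1.eigenvectorUnitary : Matrix n n 𝕜) = CFC.sqrt M := by
  rw [CFC.sqrt_eq_real_sqrt M hM.nonneg, cfcₙ_eq_cfc, hM.1.cfc_eq, IsHermitian.cfc,
    Unitary.conjStarAlgAut_apply]

lemma PosSemidef.norm_trace_mul_mul_conjTranspose_sq_le {Z : Matrix n n 𝕜} (hZ : Z.PosSemidef)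
    (X Y : Matrix n n 𝕜) :
    ‖(Y * Z * Xᴴ).trace‖ ^ 2 ≤
      RCLike.re (X * Z * Xᴴ).trace * RCLike.re (Y * Z * Yᴴ).trace := by
  let := Z.toMatrixSeminormedAddCommGroup hZ
  let := Z.toMatrixInnerProductSpace hZ
  have := inner_mul_inner_self_le (𝕜 := 𝕜) X Y
  rwa [norm_inner_symm Y X, ← sq] at this

lemma PosDef.sq_re_trace_le_of_isHermitian [DecidableEq n] {Z S : Matrix n n 𝕜} (hZ : Z.PosDef)
    (hS : S.IsHermitian) :
    RCLike.re S.trace ^ 2 ≤ RCLike.re (S * S * Z).trace * RCLike.re Z⁻¹.trace := by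
  have hdet : IsUnit Z.det := (isUnit_iff_isUnit_det Z).mp hZ.isUnit
  have hcs := hZ.posSemidef.norm_trace_mul_mul_conjTranspose_sq_le Z⁻¹ S
  rw [hZ.inv.isHermitian.eq, mul_nonsing_inv_cancel_right _ _ hdet,
    nonsing_inv_mul _ hdet, one_mul, hS.eq, trace_mul_cycle, mul_comm] at hcs
  calc RCLike.re S.trace ^ 2 ≤ ‖S.trace‖ ^ 2 :=
        sq_le_sq.mpr ((RCLike.abs_re_le_norm _).trans (le_abs_self _))
    _ ≤ _ := hcs

lemma PosSemidef.re_trace_mul_self_mul_nonneg {Z : Matrix n n 𝕜} (hZ : Z.PosSemidef)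
    {S : Matrix n n 𝕜} (hS : S.IsHermitian) : 0 ≤ RCLike.re (S * S * Z).trace := by
  have hSZS := hZ.conjTranspose_mul_mul_same S
  rw [hS.eq] at hSZS
  rw [← trace_mul_cycle]
  exact (RCLike.nonneg_iff.mp hSZS.trace_nonneg).1

open scoped MatrixOrder in
lemma PosDef.sq_re_trace_sqrt_le [DecidableEq n] {M Z : Matrix n n 𝕜} (hM : M.PosSemidef)
    (hZ : Z.PosDef) :
    RCLike.re (CFC.sqrt M).trace ^ 2 ≤ RCLike.re (M * Z).trace * RCLike.re Z⁻¹.trace := by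
  simpa only [CFC.sqrt_mul_sqrt_self M hM.nonneg] using
    hZ.sq_re_trace_le_of_isHermitian (CFC.sqrt_nonneg M).posSemidef.isHermitian

open scoped MatrixOrder in
lemma PosSemidef.re_trace_mul_nonneg [DecidableEq n] {M Z : Matrix n n 𝕜} (hM : M.PosSemidef)
    (hZ : Z.PosSemidef) : 0 ≤ RCLike.re (M * Z).trace := by
  simpa only [CFC.sqrt_mul_sqrt_self M hM.nonneg] using
    hZ.re_trace_mul_self_mul_nonneg (CFC.sqrt_nonneg M).posSemidef.isHermitian

open scoped MatrixOrder in
lemma PosDef.dual_bound_le_re_trace_mul [DecidableEq n] {A B Z : Matrix n n 𝕜} {γ P ν : ℝ}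
    (hZ : Z.PosDef) (hP : 0 < P) (hsec : γ ≤ RCLike.re (B * Z).trace)
    (hpow : RCLike.re Z⁻¹.trace ≤ P) (hν : 0 ≤ ν) (h : (A - (ν : 𝕜) • B).PosSemidef) :
    1 / P * RCLike.re (CFC.sqrt (A - (ν : 𝕜) • B)).trace ^ 2 + ν * γ ≤
      RCLike.re (A * Z).trace := by
  have hdec : RCLike.re (A * Z).trace =
      RCLike.re ((A - (ν : 𝕜) • B) * Z).trace + ν * RCLike.re (B * Z).trace := by
    simp [Matrix.sub_mul, Matrix.trace_sub, RCLike.smul_re]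
  have hdual : 1 / P * RCLike.re (CFC.sqrt (A - (ν : 𝕜) • B)).trace ^ 2 ≤
      RCLike.re ((A - (ν : 𝕜) • B) * Z).trace := by
    rw [one_div, inv_mul_le_iff₀ hP, mul_comm P]
    exact (hZ.sq_re_trace_sqrt_le h).trans
      (mul_le_mul_of_nonneg_left hpow (h.re_trace_mul_nonneg hZ.posSemidef))
  linarith [mul_le_mul_of_nonneg_left hsec hν]

end Matrix

theorem weak_duality_zf_general {m : ℕ} (A B : Matrix (Fin m) (Fin m) ℂ)
    (γ P : ℝ) (hP : 0 < P)
    (Z : Matrix (Fin m) (Fin m) ℂ) (hZ : Z.PosDef)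
    (hsec : ((B⁻¹ * Z).trace).re ≥ γ) (hpow : (Z⁻¹.trace).re ≤ P)
    (ν : ℝ) (hν : 0 ≤ ν) (h : (A⁻¹ - (ν : ℂ) • B⁻¹).PosSemidef) :
    ((A⁻¹ * Z).trace).re ≥ (1 / P) * ((((h.1.eigenvectorUnitary : Matrix (Fin m) (Fin m) ℂ) *
      diagonal ((fun x : ℝ => (x : ℂ)) ∘ Real.sqrt ∘ h.1.eigenvalues) *
      (star h.1.eigenvectorUnitary : Matrix (Fin m) (Fin m) ℂ)).trace).re) ^ 2 + ν * γ := by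
  -- `erw`: the statement's `fun x : ℝ => (x : ℂ)` is `RCLike.ofReal` only up to unfolding.
  erw [h.eigenvectorUnitary_mul_diagonal_sqrt_mul_star]
  exact hZ.dual_bound_le_re_trace_mul hP hsec hpow hν h

/-- Weak duality for the ZF–ZF filter design: for any primal-feasible positive definite
Hermitian `Z` (i.e. `tr(B⁻¹ Z) ≥ γ` and `tr(Z⁻¹) ≤ P`) and any `ν ≥ 0` with
`A⁻¹ − ν B⁻¹ ⪰ 0`, one has `tr(A⁻¹ Z) ≥ (1/P) tr((A⁻¹ − ν B⁻¹)^{1/2})² + ν γ`. -/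
theorem weak_duality_zf {m : ℕ} (A B : Matrix (Fin m) (Fin m) ℂ)
    (hA : A.PosDef) (hB : B.PosDef) (γ P : ℝ) (hγ : 0 < γ) (hP : 0 < P)
    (Z : Matrix (Fin m) (Fin m) ℂ) (hZ : Z.PosDef)
    (hsec : ((B⁻¹ * Z).trace).re ≥ γ) (hpow : (Z⁻¹.trace).re ≤ P)
    (ν : ℝ) (hν : 0 ≤ ν) (h : (A⁻¹ - (ν : ℂ) • B⁻¹).PosSemidef) :
    ((A⁻¹ * Z).trace).re ≥ (1 / P) * ((((h.1.eigenvectorUnitary : Matrix (Fin m) (Fin m) ℂ) *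
      diagonal ((fun x : ℝ => (x : ℂ)) ∘ Real.sqrt ∘ h.1.eigenvalues) *
      (star h.1.eigenvectorUnitary : Matrix (Fin m) (Fin m) ℂ)).trace).re) ^ 2 + ν * γ :=
  weak_duality_zf_general A B γ P hP Z hZ hsec hpow ν hν h
end
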